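/- In the Cartesian product K_3 □ K_3, the neighborhood of every vertex induces a graph isomorphic to 2K_2; consequently K_3 □ K_3 is claw-induced-saturated. -/

import Mathlib

/-!
In `K₃ □ K₃` the neighbours of a vertex are the two other vertices on each of the two lines
through it, and two of them are adjacent exactly when they share a line.

Saturation then holds in every locally `2K₂` graph `G`. Each edge `uv` of `G` lies in exactly one
triangle `uvw`, because the neighbours of `u` form two disjoint edges. An induced claw centred at
`c` would need three independent neighbours of `c`, which `2K₂` lacks. Deleting `uv` leaves a claw
centred at `w`, with leaves `u`, `v` and a neighbour of `w` on its other edge. Adding a non-edge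
`uv` creates a claw centred at `u`: on each of the two edges of the neighbourhood of `u` some
vertex is not adjacent to `v`, or else that edge would lie in two triangles, through `u` and `v`.
-/

open SimpleGraph

/-- `G` contains an induced copy of `H`. -/
def HasInducedCopy {W V : Type*} (H : SimpleGraph W) (G : SimpleGraph V) : Prop :=
  Nonempty (H ↪g G)

/-- `G` is `H`-induced-saturated: `G` has no induced copy of `H`, but deleting any edge
or adding any non-edge creates an induced copy of `H`. -/
def IsIndSat {V W : Type*} (G : SimpleGraph V) (H : SimpleGraph W) : Prop :=
  ¬ HasInducedCopy H G ∧
  (∀ u v : V, G.Adj u v → HasInducedCopy H (G.deleteEdges {s(u, v)})) ∧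
  (∀ u v : V, u ≠ v → ¬ G.Adj u v →
    HasInducedCopy H (G ⊔ SimpleGraph.fromEdgeSet {s(u, v)}))

/-- The claw `K_{1,3}`: star with center `0` and leaves `1, 2, 3`. -/
def claw : SimpleGraph (Fin 4) :=
  SimpleGraph.fromRel (fun i _ => i = 0)

/-- `2K₂`: two disjoint edges. -/
def twoK2 : SimpleGraph (Fin 2 × Fin 2) :=
  SimpleGraph.fromRel (fun x y => x.1 = y.1)

/-- The Cartesian product `K₃ □ K₃`. -/
def K33 : SimpleGraph (Fin 3 × Fin 3) :=
  (completeGraph (Fin 3)).boxProd (completeGraph (Fin 3))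

namespace SimpleGraph

variable {V W : Type*}

def IsLocally (G : SimpleGraph V) (H : SimpleGraph W) : Prop :=
  ∀ v, Nonempty (G.induce (G.neighborSet v) ≃g H)

theorem IsLocally.exists_embedding {G : SimpleGraph V} {H : SimpleGraph W} (h : G.IsLocally H)
    (v : V) : ∃ f : H ↪g G, Set.range f = G.neighborSet v := by
  obtain ⟨e⟩ := h v
  refine ⟨(Embedding.induce _).comp e.symm.toEmbedding, ?_⟩
  ext x
  refine ⟨?_, fun hx => ⟨e ⟨x, hx⟩, by simp⟩⟩
  rintro ⟨a, rfl⟩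
  exact (e.symm a).2

end SimpleGraph

instance : DecidableRel claw.Adj := inferInstanceAs (DecidableRel (fromRel _).Adj)

instance : DecidableRel twoK2.Adj := inferInstanceAs (DecidableRel (fromRel _).Adj)

theorem hasInducedCopy_claw_iff {V : Type*} {G : SimpleGraph V} :
    HasInducedCopy claw G ↔ ∃ c x y z, G.Adj c x ∧ G.Adj c y ∧ G.Adj c z ∧
      ¬G.Adj x y ∧ ¬G.Adj x z ∧ ¬G.Adj y z ∧ x ≠ y ∧ x ≠ z ∧ y ≠ z := by
  constructor
  · rintro ⟨f⟩
    refine ⟨f 0, f 1, f 2, f 3, ?_⟩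
    simp only [f.map_adj_iff, ne_eq, f.injective.eq_iff]
    decide
  · rintro ⟨c, x, y, z, hx, hy, hz, hxy, hxz, hyz, nxy, nxz, nyz⟩
    have hadj : ∀ a b, G.Adj (![c, x, y, z] a) (![c, x, y, z] b) ↔ claw.Adj a b := by
      intro a b
      fin_cases a <;> fin_cases b <;>
        simp [claw, fromRel_adj, hx, hy, hz, hx.symm, hy.symm, hz.symm, hxy, hxz, hyz,
          G.adj_comm y x, G.adj_comm z x, G.adj_comm z y]
    refine ⟨⟨![c, x, y, z], fun a b hab => ?_⟩, hadj _ _⟩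
    fin_cases a <;> fin_cases b <;>
      simp_all [hx.ne, hy.ne, hz.ne, hx.ne.symm, hy.ne.symm, hz.ne.symm]

theorem twoK2_exists_adj : ∀ a, ∃ b, twoK2.Adj a b := by decide

theorem twoK2_eq_of_adj_of_adj : ∀ a b c, twoK2.Adj a b → twoK2.Adj a c → b = c := by decide

theorem twoK2_exists_not_adj_of_adj :
    ∀ a b, twoK2.Adj a b → ∃ c, c ≠ a ∧ c ≠ b ∧ ¬twoK2.Adj a c ∧ ¬twoK2.Adj b c := by
  decide

theorem twoK2_adj_of_ne : ∀ a b c, a ≠ b → a ≠ c → b ≠ c →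
    twoK2.Adj a b ∨ twoK2.Adj a c ∨ twoK2.Adj b c := by
  decide

namespace SimpleGraph.IsLocally

variable {V : Type*} {G : SimpleGraph V}

theorem existsUnique_adj_adj (h : G.IsLocally twoK2) {u v : V} (huv : G.Adj u v) :
    ∃! w, G.Adj u w ∧ G.Adj v w := by
  obtain ⟨f, hf⟩ := h.exists_embedding u
  have hmem : ∀ {x}, G.Adj u x → x ∈ Set.range f := fun hx => hf ▸ hx
  obtain ⟨a, rfl⟩ := hmem huv
  obtain ⟨b, hab⟩ := twoK2_exists_adj a
  refine ⟨f b, ⟨hf.subset ⟨b, rfl⟩, f.map_adj_iff.2 hab⟩, ?_⟩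
  rintro w ⟨huw, hvw⟩
  obtain ⟨c, rfl⟩ := hmem huw
  rw [twoK2_eq_of_adj_of_adj a b c hab (f.map_adj_iff.1 hvw)]

theorem not_hasInducedCopy_claw (h : G.IsLocally twoK2) : ¬HasInducedCopy claw G := by
  rw [hasInducedCopy_claw_iff]
  rintro ⟨c, x, y, z, hx, hy, hz, hxy, hxz, hyz, nxy, nxz, nyz⟩
  obtain ⟨f, hf⟩ := h.exists_embedding c
  obtain ⟨a, rfl⟩ : x ∈ Set.range f := hf ▸ hx
  obtain ⟨b, rfl⟩ : y ∈ Set.range f := hf ▸ hy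
  obtain ⟨d, rfl⟩ : z ∈ Set.range f := hf ▸ hz
  simp only [f.map_adj_iff, f.injective.ne_iff] at hxy hxz hyz nxy nxz nyz
  rcases twoK2_adj_of_ne a b d nxy nxz nyz with h | h | h <;> contradiction

theorem hasInducedCopy_claw_deleteEdges (h : G.IsLocally twoK2) {u v : V} (huv : G.Adj u v) :
    HasInducedCopy claw (G.deleteEdges {s(u, v)}) := by
  obtain ⟨w, ⟨huw, hvw⟩, -⟩ := h.existsUnique_adj_adj huv
  obtain ⟨f, hf⟩ := h.exists_embedding w
  obtain ⟨a, rfl⟩ : u ∈ Set.range f := hf ▸ huw.symm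
  obtain ⟨b, rfl⟩ : v ∈ Set.range f := hf ▸ hvw.symm
  have hab : twoK2.Adj a b := f.map_adj_iff.1 huv
  obtain ⟨c, hca, hcb, hac, hbc⟩ := twoK2_exists_not_adj_of_adj a b hab
  have hwc : G.Adj w (f c) := hf.subset ⟨c, rfl⟩
  refine hasInducedCopy_claw_iff.2 ⟨w, f a, f b, f c, ?_⟩
  simp [deleteEdges_adj, huw.symm, hvw.symm, hwc, huw.ne.symm, hvw.ne.symm, f.map_adj_iff, hab.ne,
    hac, hbc, hca.symm, hcb.symm]

theorem hasInducedCopy_claw_sup_edge (h : G.IsLocally twoK2) {u v : V} (hne : u ≠ v)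
    (huv : ¬G.Adj u v) : HasInducedCopy claw (G ⊔ fromEdgeSet {s(u, v)}) := by
  obtain ⟨f, hf⟩ := h.exists_embedding u
  have hu : ∀ a, G.Adj u (f a) := fun a => hf.subset ⟨a, rfl⟩
  have hv : ∀ i, ∃ j, ¬G.Adj v (f (i, j)) := by
    intro i
    by_contra! hvi
    have hedge : G.Adj (f (i, 0)) (f (i, 1)) := f.map_adj_iff.2 (by fin_cases i <;> decide)
    exact hne ((h.existsUnique_adj_adj hedge).unique ⟨(hu _).symm, (hu _).symm⟩
      ⟨(hvi 0).symm, (hvi 1).symm⟩)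
  obtain ⟨j, hvx⟩ := hv 0
  obtain ⟨k, hvy⟩ := hv 1
  have hxy : ¬twoK2.Adj (0, j) (1, k) := by simp [twoK2, fromRel_adj]
  have hvf : ∀ a, v ≠ f a := fun a hva => huv (hva ▸ hu a)
  refine hasInducedCopy_claw_iff.2 ⟨u, v, f (0, j), f (1, k), ?_⟩
  simp [huv, hne, hne.symm, hu, hvx, hvy, hvf, f.map_adj_iff, hxy, (hu _).ne.symm]

theorem isIndSat_claw (h : G.IsLocally twoK2) : IsIndSat G claw :=
  ⟨h.not_hasInducedCopy_claw, fun _ _ => h.hasInducedCopy_claw_deleteEdges,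
    fun _ _ => h.hasInducedCopy_claw_sup_edge⟩

end SimpleGraph.IsLocally

instance {α β : Type*} [DecidableEq α] [DecidableEq β] (G : SimpleGraph α) (H : SimpleGraph β)
    [DecidableRel G.Adj] [DecidableRel H.Adj] : DecidableRel (G □ H).Adj :=
  fun _ _ => inferInstanceAs (Decidable (_ ∨ _))

instance : DecidableRel K33.Adj := inferInstanceAs (DecidableRel (_ □ _).Adj)

instance (v : Fin 3 × Fin 3) : DecidablePred (· ∈ K33.neighborSet v) :=
  inferInstanceAs (DecidablePred (K33.Adj v))

def K33.neighbor (v : Fin 3 × Fin 3) (p : Fin 2 × Fin 2) : Fin 3 × Fin 3 :=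
  if p.1 = 0 then (v.1 + p.2.succ, v.2) else (v.1, v.2 + p.2.succ)

theorem K33.adj_neighbor : ∀ v p, K33.Adj v (K33.neighbor v p) := by decide

theorem K33.bijective_neighbor :
    ∀ v, Function.Bijective
      ((K33.neighborSet v).codRestrict (K33.neighbor v) (K33.adj_neighbor v)) := by
  decide

theorem K33.neighbor_adj_neighbor :
    ∀ v p q, K33.Adj (K33.neighbor v p) (K33.neighbor v q) ↔ twoK2.Adj p q := by
  decide

theorem K33_isLocally_twoK2 : K33.IsLocally twoK2 := fun v =>
  ⟨RelIso.symm
    ⟨Equiv.ofBijective _ (K33.bijective_neighbor v), K33.neighbor_adj_neighbor v _ _⟩⟩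

/-- In `K₃ □ K₃` the neighborhood of every vertex induces a graph isomorphic
to `2K₂`; consequently `K₃ □ K₃` is claw-induced-saturated. -/
theorem K33_claw_indSat :
    (∀ v, Nonempty ((K33.induce (K33.neighborSet v)) ≃g twoK2)) ∧
    IsIndSat K33 claw :=
  ⟨K33_isLocally_twoK2, K33_isLocally_twoK2.isIndSat_claw⟩
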